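/- arXiv:2309.03654 — 2 statements merged into one kernel-verified Lean document; each statement's English description precedes it below -/
import Mathlib

section
/- Let M > 0 and let α̂, D̂: ℝ → ℝ⁺ be smooth functions. The constant process P_t⁰ ≡ M is a solution of the Stratonovich stochastic differential equation dP_t⁰ = {(D̂′(P_t⁰)/2 − α̂(P_t⁰) P_t⁰)[1 − (M/P_t⁰)²]} dt + {2D̂(P_t⁰)[1 − (M/P_t⁰)²]}^{1/2} ∘ dW_t with initial condition P_0⁰ = M; that is, the rest-energy state P⁰ = M (null relativistic momentum) is an absorbing state for the Stratonovich-interpreted relativistic energy equation, so a relativistic Brownian particle started at rest may remain at rest forever under this interpretation. -/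
open MeasureTheory ProbabilityTheory Filter Set
open scoped ENNReal

noncomputable section

/-- A partition `a = t 0 < t 1 < ... < t n = b` of the interval `[a, b]`. -/
structure IntervalPartition (a b : ℝ) where
  n : ℕ
  t : ℕ → ℝ
  n_pos : 0 < n
  mono : ∀ i < n, t i < t (i + 1)
  first : t 0 = a
  last : t n = b

/-- The mesh (diameter) `‖Δ‖ = max_j (t_j - t_{j-1})` of a partition. -/
def IntervalPartition.mesh {a b : ℝ} (π : IntervalPartition a b) : ℝ :=
  Finset.sup' (Finset.range π.n) (Finset.nonempty_range_iff.mpr π.n_pos.ne')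
    (fun i => π.t (i + 1) - π.t i)

/-- Convergence in probability of partition-indexed random variables as the mesh tends to `0`. -/
def TendstoInProbMesh {Ω : Type*} [MeasureSpace Ω] {E : Type*} [NormedAddCommGroup E]
    (a b : ℝ) (S : IntervalPartition a b → Ω → E) (L : Ω → E) : Prop :=
  ∀ ε > (0 : ℝ), ∀ δ > (0 : ℝ), ∃ η > (0 : ℝ), ∀ π : IntervalPartition a b,
    π.mesh < η → ℙ {ω | ε ≤ ‖S π ω - L ω‖} < ENNReal.ofReal δ

/-- Right-endpoint Riemann sum `Σ_j Y_{t_j} (X_{t_j} - X_{t_{j-1}})`. -/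
def riemannSumRight {Ω : Type*} (a b : ℝ) (Y X : ℝ → Ω → ℝ) (π : IntervalPartition a b) (ω : Ω) : ℝ :=
  ∑ j ∈ Finset.range π.n, Y (π.t (j + 1)) ω * (X (π.t (j + 1)) ω - X (π.t j) ω)

/-- Left-endpoint Riemann sum `Σ_j Y_{t_{j-1}} (X_{t_j} - X_{t_{j-1}})`. -/
def riemannSumLeft {Ω : Type*} (a b : ℝ) (Y X : ℝ → Ω → ℝ) (π : IntervalPartition a b) (ω : Ω) : ℝ :=
  ∑ j ∈ Finset.range π.n, Y (π.t j) ω * (X (π.t (j + 1)) ω - X (π.t j) ω)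

/-- `I` is the Hänggi–Klimontovich integral `∫_a^b Y_t • dX_t`: the limit in probability of
right-endpoint Riemann sums as the partition mesh tends to `0`. -/
def IsHKIntegral {Ω : Type*} [MeasureSpace Ω] (a b : ℝ) (Y X : ℝ → Ω → ℝ) (I : Ω → ℝ) : Prop :=
  TendstoInProbMesh a b (riemannSumRight a b Y X) I

/-- `I` is the Itô integral `∫_a^b Y_t dX_t`: the limit in probability of left-endpoint
Riemann sums as the partition mesh tends to `0`. -/
def IsItoIntegral {Ω : Type*} [MeasureSpace Ω] (a b : ℝ) (Y X : ℝ → Ω → ℝ) (I : Ω → ℝ) : Prop :=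
  TendstoInProbMesh a b (riemannSumLeft a b Y X) I

/-- `W` is a standard Brownian motion: it starts at `0`, has almost surely continuous paths,
independent increments, and Gaussian increments `W_t - W_s ~ N(0, t - s)`. -/
structure IsBrownianMotion {Ω : Type*} [MeasureSpace Ω] (W : ℝ → Ω → ℝ) : Prop where
  isProb : IsProbabilityMeasure (ℙ : Measure Ω)
  measurable : ∀ t, Measurable (W t)
  start : ∀ᵐ ω, W 0 ω = 0
  contPaths : ∀ᵐ ω, Continuous fun t => W t ω
  incrLaw : ∀ s t : ℝ, 0 ≤ s → s ≤ t →
    Measure.map (fun ω => W t ω - W s ω) ℙ = gaussianReal 0 (Real.toNNReal (t - s))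
  indepIncr : ∀ n : ℕ, ∀ t : Fin (n + 1) → ℝ, Monotone t → (∀ i, 0 ≤ t i) →
    iIndepFun
      (fun (i : Fin n) ω => W (t i.succ) ω - W (t i.castSucc) ω) ℙ

/-- `h(x, t)` satisfies the Lipschitz condition in its first argument, uniformly for `t ∈ [0,T]`. -/
def LipschitzInX (h : ℝ → ℝ → ℝ) (T : ℝ) : Prop :=
  ∃ C > (0 : ℝ), ∀ x y t : ℝ, 0 ≤ t → t ≤ T → |h x t - h y t| ≤ C * |x - y|

/-- `h(x, t)` satisfies the linear growth condition in its first argument for `t ∈ [0,T]`. -/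
def LinearGrowthInX (h : ℝ → ℝ → ℝ) (T : ℝ) : Prop :=
  ∃ K > (0 : ℝ), ∀ x t : ℝ, 0 ≤ t → t ≤ T → |h x t| ≤ K * (1 + |x|)

/-- `X` solves the Itô stochastic differential equation
`dX_t = f(X_t, t) dt + g(X_t, t) dW_t`, `X_0 = x₀`, on `[0, T]`: it has almost surely continuous
sample paths and for each `t ∈ (0, T]`, `X_t = x₀ + ∫_0^t f(X_s, s) ds + ∫_0^t g(X_s, s) dW_s`
almost surely, the last integral being the Itô integral (limit in probability of left-endpoint
Riemann sums). -/
def SolvesItoSDE {Ω : Type*} [MeasureSpace Ω] (W X : ℝ → Ω → ℝ) (f g : ℝ → ℝ → ℝ)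
    (x₀ T : ℝ) : Prop :=
  (∀ᵐ ω, X 0 ω = x₀) ∧
  (∀ᵐ ω, ContinuousOn (fun t => X t ω) (Icc 0 T)) ∧
  (∀ t, Measurable (X t)) ∧
  ∀ t, 0 < t → t ≤ T → ∃ I : Ω → ℝ,
    IsItoIntegral 0 t (fun s ω => g (X s ω) s) W I ∧
    ∀ᵐ ω, X t ω = x₀ + (∫ s in (0 : ℝ)..t, f (X s ω) s) + I ω

/-- `X` solves the Hänggi–Klimontovich stochastic differential equation
`dX_t = f(X_t, t) dt + g(X_t, t) • dW_t`, `X_0 = x₀`, on `[0, T]`: it has almost surely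
continuous sample paths and for each `t ∈ (0, T]`,
`X_t = x₀ + ∫_0^t f(X_s, s) ds + ∫_0^t g(X_s, s) • dW_s` almost surely, the last integral being
the Hänggi–Klimontovich integral (limit in probability of right-endpoint Riemann sums). -/
def SolvesHKSDE {Ω : Type*} [MeasureSpace Ω] (W X : ℝ → Ω → ℝ) (f g : ℝ → ℝ → ℝ)
    (x₀ T : ℝ) : Prop :=
  (∀ᵐ ω, X 0 ω = x₀) ∧
  (∀ᵐ ω, ContinuousOn (fun t => X t ω) (Icc 0 T)) ∧
  (∀ t, Measurable (X t)) ∧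
  ∀ t, 0 < t → t ≤ T → ∃ I : Ω → ℝ,
    IsHKIntegral 0 t (fun s ω => g (X s ω) s) W I ∧
    ∀ᵐ ω, X t ω = x₀ + (∫ s in (0 : ℝ)..t, f (X s ω) s) + I ω

/-- Midpoint Riemann sum `Σ_j Y_{(t_j + t_{j-1})/2} (X_{t_j} - X_{t_{j-1}})`. -/
def riemannSumMid {Ω : Type*} (a b : ℝ) (Y X : ℝ → Ω → ℝ) (π : IntervalPartition a b) (ω : Ω) : ℝ :=
  ∑ j ∈ Finset.range π.n,
    Y ((π.t j + π.t (j + 1)) / 2) ω * (X (π.t (j + 1)) ω - X (π.t j) ω)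

/-- `I` is the Stratonovich integral `∫_a^b Y_t ∘ dX_t`: the limit in probability of
midpoint-evaluated Riemann sums as the partition mesh tends to `0`. -/
def IsStratIntegral {Ω : Type*} [MeasureSpace Ω] (a b : ℝ) (Y X : ℝ → Ω → ℝ)
    (I : Ω → ℝ) : Prop :=
  TendstoInProbMesh a b (riemannSumMid a b Y X) I

/-- `X` solves the Stratonovich stochastic differential equation
`dX_t = f(X_t, t) dt + g(X_t, t) ∘ dW_t`, `X_0 = x₀`, on `[0, T]`. -/
def SolvesStratSDE {Ω : Type*} [MeasureSpace Ω] (W X : ℝ → Ω → ℝ) (f g : ℝ → ℝ → ℝ)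
    (x₀ T : ℝ) : Prop :=
  (∀ᵐ ω, X 0 ω = x₀) ∧
  (∀ᵐ ω, ContinuousOn (fun t => X t ω) (Icc 0 T)) ∧
  (∀ t, Measurable (X t)) ∧
  ∀ t, 0 < t → t ≤ T → ∃ I : Ω → ℝ,
    IsStratIntegral 0 t (fun s ω => g (X s ω) s) W I ∧
    ∀ᵐ ω, X t ω = x₀ + (∫ s in (0 : ℝ)..t, f (X s ω) s) + I ω

/-- Let `M > 0` and let `α̂, D̂ : ℝ → ℝ⁺` be smooth. The constant process
`P⁰_t ≡ M` is a solution of the Stratonovich SDE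
`dP⁰_t = {(D̂'(P⁰_t)/2 − α̂(P⁰_t) P⁰_t)[1 − (M/P⁰_t)²]} dt
        + {2 D̂(P⁰_t)[1 − (M/P⁰_t)²]}^{1/2} ∘ dW_t`
with initial condition `P⁰_0 = M`: the rest-energy state `P⁰ = M` (null relativistic momentum)
is absorbing for the Stratonovich-interpreted relativistic energy equation, so a relativistic
Brownian particle started at rest may remain at rest forever under this interpretation. -/
theorem rest_state_solves_stratonovich_relativistic_energy_sde
    {Ω : Type*} [MeasureSpace Ω] (W : ℝ → Ω → ℝ) (hW : IsBrownianMotion W)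
    (M : ℝ) (hM : 0 < M) (αh Dh : ℝ → ℝ)
    (hα : ContDiff ℝ (⊤ : ℕ∞) αh) (hD : ContDiff ℝ (⊤ : ℕ∞) Dh)
    (hαpos : ∀ x, 0 < αh x) (hDpos : ∀ x, 0 < Dh x) :
    ∀ T > (0 : ℝ),
      SolvesStratSDE W (fun _ _ => M)
        (fun p _ => (deriv Dh p / 2 - αh p * p) * (1 - (M / p) ^ 2))
        (fun p _ => Real.sqrt (2 * Dh p * (1 - (M / p) ^ 2))) M T := by
  intro T hT
  have hMM : (1 : ℝ) - (M / M) ^ 2 = 0 := by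
    rw [div_self hM.ne']; norm_num
  refine ⟨Filter.Eventually.of_forall fun ω => rfl,
    Filter.Eventually.of_forall fun ω => continuousOn_const,
    fun t => measurable_const, fun t ht htT => ?_⟩
  refine ⟨fun _ => 0, ?_, ?_⟩
  · intro ε hε δ hδ
    refine ⟨1, one_pos, fun π hπ => ?_⟩
    have : {ω : Ω | ε ≤ ‖riemannSumMid 0 t (fun s ω =>
        Real.sqrt (2 * Dh M * (1 - (M / M) ^ 2))) W π ω - 0‖} = ∅ := by
      ext ω
      simp only [Set.mem_setOf_eq, Set.mem_empty_iff_false, iff_false, not_le]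
      have : riemannSumMid 0 t (fun s ω =>
          Real.sqrt (2 * Dh M * (1 - (M / M) ^ 2))) W π ω = 0 := by
        unfold riemannSumMid
        simp [hMM]
      rw [this]
      simpa using hε
    rw [this]
    simp [ENNReal.ofReal_pos.mpr hδ]
  · refine Filter.Eventually.of_forall fun ω => ?_
    have : (∫ s in (0:ℝ)..t,
        (deriv Dh M / 2 - αh M * M) * (1 - (M / M) ^ 2)) = 0 := by
      simp [hMM]
    rw [this]; ring
end
end

section
/- Let (W_t) be a standard Brownian motion and let Υ_t = Σ_{i=1}^m ζ_{i−1} 1_{(t_{i−1}, t_i]}(t), t ∈ [0,T], be a step process, where 0 = t_0 < t_1 < … < t_m = T and ζ_0, …, ζ_{m−1} are random variables. Then Υ is backward integrable with respect to W in the sense of Russo–Vallois, and its backward integral coincides with the Hänggi–Klimontovich limit: ∫_0^t Υ_s d⁺W_s = lim_{‖Δ_n‖→0} Σ_{j=1}^n Υ_{t_j}(W_{t_j} − W_{t_{j−1}}) in probability, where the limit is over partitions Δ_n of [0,t] with mesh ‖Δ_n‖ tending to 0. -/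
open MeasureTheory ProbabilityTheory Filter Set
open scoped ENNReal

noncomputable section

/-- `I` is the backward (Russo–Vallois) integral process `I_t = ∫_0^t Υ_s d⁺W_s` on `[0, T]`:
`sup_{0≤t≤T} |∫_0^t Υ_s (W_s − W_{s−ε})/ε ds − I_t| → 0` in probability as `ε ↓ 0`. -/
def IsBackwardIntegral {Ω : Type*} [MeasureSpace Ω] (T : ℝ) (Υ : ℝ → Ω → ℝ)
    (W : ℝ → Ω → ℝ) (I : ℝ → Ω → ℝ) : Prop :=
  ∀ δ > (0 : ℝ), ∀ ρ > (0 : ℝ), ∃ ε₀ > (0 : ℝ), ∀ ε : ℝ, 0 < ε → ε < ε₀ →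
    ℙ {ω | δ ≤ ⨆ t : Icc (0 : ℝ) T,
        |(∫ s in (0 : ℝ)..(t : ℝ), Υ s ω * ((W s ω - W (s - ε) ω) / ε)) - I t ω|}
      < ENNReal.ofReal ρ

/-!
Pathwise, both approximations differ from the elementary integral
`Σ_i ζ_i (W_{τ_{i+1} ∧ t} - W_{τ_i ∧ t})` by at most `2 Σ_i |ζ_i|` times the modulus of continuity
of the path at scale `ε` (resp. at the mesh). Indeed, write `1_{(a, b]} = 1_{s ≤ b} - 1_{s ≤ a}`:
the backward quotient integrated over `[0, c]` is the left average `ε⁻¹ ∫_{c-ε}^c W` minus a term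
independent of `c`, and the right-endpoint Riemann sum of `1_{s ≤ c}` telescopes to `W` at the last
partition point below `c`. As the paths are a.s. continuous, the modulus tends to `0` a.s., hence in
probability.
-/

open Topology

/-- Modulus of continuity of `f` on `s`, with the supremum over rational pairs only, so that it is
measurable when `f` is a random path. -/
def ratModulus (f : ℝ → ℝ) (s : Set ℝ) (δ : ℝ) : ℝ≥0∞ :=
  ⨆ (p : ℚ × ℚ) (_ : (p.1 : ℝ) ∈ s ∧ (p.2 : ℝ) ∈ s ∧ dist (p.1 : ℝ) p.2 < δ),
    edist (f p.1) (f p.2)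

section ratModulus

variable {f : ℝ → ℝ} {s : Set ℝ} {δ : ℝ}

theorem measurable_ratModulus {Ω : Type*} [MeasurableSpace Ω] {X : ℝ → Ω → ℝ}
    (hX : ∀ t, Measurable (X t)) :
    Measurable fun ω => ratModulus (fun t => X t ω) s δ :=
  Measurable.iSup fun _ => Measurable.iSup fun _ => (hX _).edist (hX _)

theorem edist_le_ratModulus (hf : Continuous f) (hs : IsOpen s) {u v : ℝ} (hu : u ∈ s)
    (hv : v ∈ s) (huv : dist u v < δ) : edist (f u) (f v) ≤ ratModulus f s δ := by
  let U : Set (ℝ × ℝ) := {p | p.1 ∈ s ∧ p.2 ∈ s ∧ dist p.1 p.2 < δ}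
  have hU : IsOpen U := (hs.preimage continuous_fst).inter
    ((hs.preimage continuous_snd).inter
      (isOpen_lt (continuous_fst.dist continuous_snd) continuous_const))
  have hclosed : IsClosed {p : ℝ × ℝ | edist (f p.1) (f p.2) ≤ ratModulus f s δ} :=
    isClosed_le ((hf.comp continuous_fst).edist (hf.comp continuous_snd)) continuous_const
  have hrat : U ∩ range (Prod.map ((↑) : ℚ → ℝ) ((↑) : ℚ → ℝ)) ⊆
      {p : ℝ × ℝ | edist (f p.1) (f p.2) ≤ ratModulus f s δ} := by
    rintro _ ⟨hp, q, rfl⟩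
    exact le_iSup₂ (f := fun (q : ℚ × ℚ) (_ : (q.1 : ℝ) ∈ s ∧ (q.2 : ℝ) ∈ s ∧
      dist (q.1 : ℝ) q.2 < δ) => edist (f q.1) (f q.2)) q hp
  exact hclosed.closure_subset_iff.mpr hrat
    ((Rat.denseRange_cast.prodMap Rat.denseRange_cast).open_subset_closure_inter hU
      (show (u, v) ∈ U from ⟨hu, hv, huv⟩))

theorem ratModulus_ne_top (hf : Continuous f) (hs : Bornology.IsBounded s) (δ : ℝ) :
    ratModulus f s δ ≠ ⊤ := by
  have hbdd : Bornology.IsBounded (f '' s) :=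
    (hs.isCompact_closure.image hf).isBounded.subset (image_mono subset_closure)
  refine ne_top_of_le_ne_top hbdd.ediam_ne_top (iSup₂_le fun p hp => ?_)
  exact Metric.edist_le_ediam_of_mem (mem_image_of_mem f hp.1) (mem_image_of_mem f hp.2.1)

theorem abs_sub_le_toReal_ratModulus (hf : Continuous f) (hs : IsOpen s)
    (hb : Bornology.IsBounded s) {u v : ℝ} (hu : u ∈ s) (hv : v ∈ s) (huv : |u - v| < δ) :
    |f u - f v| ≤ (ratModulus f s δ).toReal := by
  rw [← Real.dist_eq] at huv ⊢
  rw [dist_edist]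
  exact ENNReal.toReal_mono (ratModulus_ne_top hf hb δ) (edist_le_ratModulus hf hs hu hv huv)

theorem tendsto_ratModulus_zero (hf : Continuous f) (hs : Bornology.IsBounded s) :
    Tendsto (ratModulus f s) (𝓝[>] 0) (𝓝 0) := by
  rw [ENNReal.tendsto_nhds_zero]
  intro r hr
  obtain ⟨x, -, hx0, hxr⟩ := ENNReal.lt_iff_exists_real_btwn.mp hr
  have huc : UniformContinuousOn f s :=
    (hs.isCompact_closure.uniformContinuousOn_of_continuous hf.continuousOn).mono subset_closure
  obtain ⟨θ, hθ, hθf⟩ := Metric.uniformContinuousOn_iff.mp huc x (ENNReal.ofReal_pos.mp hx0)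
  filter_upwards [Ioo_mem_nhdsGT hθ] with δ hδ
  refine iSup₂_le fun p hp => ?_
  rw [edist_dist]
  exact (ENNReal.ofReal_le_ofReal (hθf _ hp.1 _ hp.2.1 (hp.2.2.trans hδ.2)).le).trans hxr.le

theorem exists_measure_le_mul_ratModulus_lt {Ω : Type*} [MeasurableSpace Ω] (μ : Measure Ω)
    [IsFiniteMeasure μ] {X : ℝ → Ω → ℝ} (hX : ∀ t, Measurable (X t))
    (hcont : ∀ᵐ ω ∂μ, Continuous fun t => X t ω) (hs : Bornology.IsBounded s) {Z : Ω → ℝ}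
    (hZ : Measurable Z) {ε ρ : ℝ} (hε : 0 < ε) (hρ : 0 < ρ) :
    ∃ n : ℕ, μ {ω | ε ≤ Z ω * (ratModulus (fun t => X t ω) s (1 / (n + 1))).toReal}
      < ENNReal.ofReal ρ := by
  let F : ℕ → Ω → ℝ := fun n ω => Z ω * (ratModulus (fun t => X t ω) s (1 / (n + 1))).toReal
  have hF : TendstoInMeasure μ F atTop 0 := by
    refine tendstoInMeasure_of_tendsto_ae
      (fun n => (hZ.mul (measurable_ratModulus hX).ennreal_toReal).aestronglyMeasurable) ?_
    filter_upwards [hcont] with ω hω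
    have hmesh : Tendsto (fun n : ℕ => (1 : ℝ) / (n + 1)) atTop (𝓝[>] 0) :=
      tendsto_nhdsWithin_iff.mpr
        ⟨tendsto_one_div_add_atTop_nhds_zero_nat,
          Eventually.of_forall fun n => show (0 : ℝ) < 1 / (n + 1) by positivity⟩
    simpa [F] using tendsto_const_nhds.mul
      ((ENNReal.tendsto_toReal ENNReal.zero_ne_top).comp
        ((tendsto_ratModulus_zero hω hs).comp hmesh))
  obtain ⟨n, hn⟩ := ((hF _ (ENNReal.ofReal_pos.mpr hε)).eventually_lt_const
    (ENNReal.ofReal_pos.mpr hρ)).exists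
  refine ⟨n, (measure_mono fun ω (hω : ε ≤ F n ω) => ?_).trans_lt hn⟩
  simp only [mem_ofPred_eq, Pi.zero_apply, edist_dist, Real.dist_eq, sub_zero]
  exact ENNReal.ofReal_le_ofReal (hω.trans (le_abs_self _))

end ratModulus

def stepFun (τ : ℕ → ℝ) (m : ℕ) (z : ℕ → ℝ) (s : ℝ) : ℝ :=
  ∑ i ∈ Finset.range m, if s ∈ Ioc (τ i) (τ (i + 1)) then z i else 0

/-- `∫_0^t stepFun τ m z df`, provided `τ ≥ 0`. -/
def stepIntegral (τ : ℕ → ℝ) (m : ℕ) (z : ℕ → ℝ) (f : ℝ → ℝ) (t : ℝ) : ℝ :=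
  ∑ i ∈ Finset.range m, z i * (f (min (τ (i + 1)) t) - f (min (τ i) t))

section stepFun

variable {τ : ℕ → ℝ} {m : ℕ} {z : ℕ → ℝ} {f : ℝ → ℝ} {t M : ℝ}

theorem stepFun_mul_eq_sum (hτ : ∀ i < m, τ i ≤ τ (i + 1)) (s y : ℝ) :
    stepFun τ m z s * y = ∑ i ∈ Finset.range m,
      z i * ((if s ≤ τ (i + 1) then y else 0) - (if s ≤ τ i then y else 0)) := by
  rw [stepFun, Finset.sum_mul]
  refine Finset.sum_congr rfl fun i hi => ?_
  have := hτ i (Finset.mem_range.mp hi)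
  by_cases h1 : s ≤ τ i
  · simp [h1, h1.trans this, not_lt.mpr h1]
  · by_cases h2 : s ≤ τ (i + 1) <;> simp [h1, h2, lt_of_not_ge h1]

/-- Both approximations of the integral take the form `Σ z_i (Φ τ_{i+1} - Φ τ_i)`, with `Φ c` the
approximation for the threshold integrand `1_{s ≤ c}`. -/
theorem abs_sum_sub_stepIntegral_le {Φ : ℝ → ℝ} {C : ℝ}
    (hΦ : ∀ i ≤ m, |Φ (τ i) - (f (min (τ i) t) - C)| ≤ M) :
    |∑ i ∈ Finset.range m, z i * (Φ (τ (i + 1)) - Φ (τ i)) - stepIntegral τ m z f t|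
      ≤ (2 * ∑ i ∈ Finset.range m, |z i|) * M := by
  let e : ℕ → ℝ := fun i => Φ (τ i) - (f (min (τ i) t) - C)
  have hsplit : ∑ i ∈ Finset.range m, z i * (Φ (τ (i + 1)) - Φ (τ i)) - stepIntegral τ m z f t
      = ∑ i ∈ Finset.range m, z i * (e (i + 1) - e i) := by
    rw [stepIntegral, ← Finset.sum_sub_distrib]
    exact Finset.sum_congr rfl fun i _ => by ring
  have he : ∀ i ∈ Finset.range m, |z i * (e (i + 1) - e i)| ≤ |z i| * (2 * M) := fun i hi => by
    have hi := Finset.mem_range.mp hi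
    rw [abs_mul]
    gcongr
    linarith [abs_sub (e (i + 1)) (e i), hΦ (i + 1) hi, hΦ i hi.le]
  calc |∑ i ∈ Finset.range m, z i * (Φ (τ (i + 1)) - Φ (τ i)) - stepIntegral τ m z f t|
      ≤ ∑ i ∈ Finset.range m, |z i| * (2 * M) :=
        hsplit ▸ (Finset.abs_sum_le_sum_abs _ _).trans (Finset.sum_le_sum he)
    _ = (2 * ∑ i ∈ Finset.range m, |z i|) * M := by rw [← Finset.sum_mul]; ring

end stepFun

def leftAverage (f : ℝ → ℝ) (ε x : ℝ) : ℝ :=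
  (∫ s in x - ε..x, f s) / ε

section backward

variable {f : ℝ → ℝ} {ε : ℝ}

theorem integral_backwardQuotient (hf : Continuous f) (a b : ℝ) :
    ∫ s in a..b, (f s - f (s - ε)) / ε = leftAverage f ε b - leftAverage f ε a := by
  have hi : ∀ u v, IntervalIntegrable f volume u v := hf.intervalIntegrable
  rw [intervalIntegral.integral_div, intervalIntegral.integral_sub (hi a b)
      (g := fun s => f (s - ε)) ((hf.comp (continuous_sub_right ε)).intervalIntegrable a b),
    intervalIntegral.integral_comp_sub_right,
    intervalIntegral.integral_interval_sub_interval_comm (hi _ _) (hi _ _) (hi _ _),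
    intervalIntegral.integral_symm (a - ε), intervalIntegral.integral_symm (b - ε), leftAverage,
    leftAverage]
  ring

theorem abs_leftAverage_sub_le (hf : Continuous f) (hε : 0 < ε) {x M : ℝ}
    (hM : ∀ u ∈ Icc (x - ε) x, |f u - f x| ≤ M) : |leftAverage f ε x - f x| ≤ M := by
  have hmean : leftAverage f ε x - f x = (∫ s in x - ε..x, (f s - f x)) / ε := by
    rw [leftAverage, intervalIntegral.integral_sub (hf.intervalIntegrable _ _)
      intervalIntegrable_const, intervalIntegral.integral_const]
    field_simp
    ring
  have hbound := intervalIntegral.norm_integral_le_of_norm_le_const (a := x - ε) (b := x)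
    (f := fun s => f s - f x) (C := M) fun u hu =>
      hM u (Ioc_subset_Icc_self (by rwa [uIoc_of_le (by linarith)] at hu))
  rw [hmean, abs_div, abs_of_pos hε, div_le_iff₀ hε]
  simpa [abs_of_pos hε] using hbound

theorem integral_ite_le {g : ℝ → ℝ} {c t : ℝ} (hc : 0 ≤ c) (ht : 0 ≤ t) :
    ∫ s in (0 : ℝ)..t, (if s ≤ c then g s else 0) = ∫ s in (0 : ℝ)..min c t, g s := by
  simp_rw [← mem_Iic, ← indicator_apply]
  rw [intervalIntegral.integral_of_le ht, setIntegral_indicator measurableSet_Iic, Ioc_inter_Iic,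
    intervalIntegral.integral_of_le (le_min hc ht), min_comm]

end backward

theorem abs_integral_stepFun_mul_backwardQuotient_sub_le {τ : ℕ → ℝ} {m : ℕ} {z : ℕ → ℝ}
    {f : ℝ → ℝ} {t ε δ M : ℝ} (hf : Continuous f) (hτ₀ : ∀ i ≤ m, 0 ≤ τ i)
    (hτ : ∀ i < m, τ i ≤ τ (i + 1)) (ht : 0 ≤ t) (hε : 0 < ε) (hεδ : ε < δ)
    (hmod : ∀ u ∈ Icc (-ε) t, ∀ v ∈ Icc (-ε) t, |u - v| < δ → |f u - f v| ≤ M) :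
    |(∫ s in (0 : ℝ)..t, stepFun τ m z s * ((f s - f (s - ε)) / ε)) - stepIntegral τ m z f t|
      ≤ (2 * ∑ i ∈ Finset.range m, |z i|) * M := by
  let g : ℝ → ℝ := fun s => (f s - f (s - ε)) / ε
  let Φ : ℝ → ℝ := fun c => ∫ s in (0 : ℝ)..t, if s ≤ c then g s else 0
  have hint : ∀ c, IntervalIntegrable (fun s => if s ≤ c then g s else 0) volume 0 t := by
    intro c
    simp_rw [← mem_Iic, ← indicator_apply, intervalIntegrable_iff]
    exact (by fun_prop : Continuous g).integrableOn_uIoc.indicator measurableSet_Iic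
  have hsplit : ∫ s in (0 : ℝ)..t, stepFun τ m z s * g s
      = ∑ i ∈ Finset.range m, z i * (Φ (τ (i + 1)) - Φ (τ i)) := by
    simp_rw [stepFun_mul_eq_sum hτ]
    rw [intervalIntegral.integral_finsetSum fun i _ => ((hint _).sub (hint _)).const_mul _]
    simp_rw [intervalIntegral.integral_const_mul, intervalIntegral.integral_sub (hint _) (hint _)]
    rfl
  rw [hsplit]
  refine abs_sum_sub_stepIntegral_le (C := leftAverage f ε 0) fun i hi => ?_
  have hc := mem_Icc.mpr ⟨le_min (hτ₀ i hi) ht, min_le_right (τ i) t⟩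
  show |(∫ s in (0 : ℝ)..t, if s ≤ τ i then (f s - f (s - ε)) / ε else 0) - _| ≤ M
  rw [integral_ite_le (hτ₀ i hi) ht, integral_backwardQuotient hf, sub_sub_sub_cancel_right]
  refine abs_leftAverage_sub_le hf hε fun u hu => hmod u ?_ _ ?_ ?_
  · exact ⟨by linarith [hu.1, hc.1], hu.2.trans hc.2⟩
  · exact ⟨by linarith [hc.1], hc.2⟩
  · rw [abs_sub_comm, abs_of_nonneg (by linarith [hu.2])]
    linarith [hu.1]

namespace IntervalPartition

variable {a b : ℝ} (π : IntervalPartition a b)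

theorem strictMonoOn : StrictMonoOn π.t (Iic π.n) :=
  strictMonoOn_Iic_of_lt_succ π.mono

theorem mem_Icc {j : ℕ} (hj : j ≤ π.n) : π.t j ∈ Icc a b :=
  ⟨π.first.symm.le.trans
      (π.strictMonoOn.monotoneOn (mem_Iic.mpr (Nat.zero_le _)) (mem_Iic.mpr hj) (Nat.zero_le j)),
    (π.strictMonoOn.monotoneOn (mem_Iic.mpr hj) (mem_Iic.mpr le_rfl) hj).trans π.last.le⟩

theorem sub_le_mesh {j : ℕ} (hj : j < π.n) : π.t (j + 1) - π.t j ≤ π.mesh :=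
  Finset.le_sup' (fun i => π.t (i + 1) - π.t i) (Finset.mem_range.mpr hj)

theorem mesh_pos : 0 < π.mesh :=
  (sub_pos.mpr (π.mono 0 π.n_pos)).trans_le (π.sub_le_mesh π.n_pos)

theorem exists_lt_iff_le (c : ℝ) : ∃ k ≤ π.n, ∀ j < π.n, (j < k ↔ π.t (j + 1) ≤ c) := by
  classical
  have hex : ∃ k, k = π.n ∨ c < π.t (k + 1) := ⟨_, Or.inl rfl⟩
  refine ⟨Nat.find hex, Nat.find_min' hex (Or.inl rfl), fun j hj => ⟨fun hjk => ?_, fun hle => ?_⟩⟩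
  · exact not_lt.mp fun h => Nat.find_min hex hjk (Or.inr h)
  · by_contra hkj
    have hkj : Nat.find hex ≤ j := not_lt.mp hkj
    rcases Nat.find_spec hex with h | h
    · omega
    · exact (h.trans_le (π.strictMonoOn.monotoneOn (mem_Iic.mpr (by omega))
        (mem_Iic.mpr (by omega)) (by omega))).not_ge hle

end IntervalPartition

theorem IntervalPartition.abs_sum_ite_sub_le {t c δ M : ℝ} (π : IntervalPartition 0 t)
    {f : ℝ → ℝ} (hc : 0 ≤ c) (hmesh : π.mesh < δ)
    (hmod : ∀ u ∈ Icc 0 t, ∀ v ∈ Icc 0 t, |u - v| < δ → |f u - f v| ≤ M) :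
    |∑ j ∈ Finset.range π.n, (if π.t (j + 1) ≤ c then f (π.t (j + 1)) - f (π.t j) else 0)
      - (f (min c t) - f 0)| ≤ M := by
  obtain ⟨k, hkn, hk⟩ := π.exists_lt_iff_le c
  have hsum : ∑ j ∈ Finset.range π.n, (if π.t (j + 1) ≤ c then f (π.t (j + 1)) - f (π.t j) else 0)
      = f (π.t k) - f 0 := by
    rw [Finset.sum_congr rfl fun j hj => if_congr (hk j (Finset.mem_range.mp hj)).symm rfl rfl,
      ← Finset.sum_filter,
      show (Finset.range π.n).filter (· < k) = Finset.range k by ext; simp; omega,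
      Finset.sum_range_sub (fun j => f (π.t j)), π.first]
  have hk_le_c : π.t k ≤ c := by
    rcases k with _ | k
    · rw [π.first]; exact hc
    · exact (hk k (by omega)).mp (Nat.lt_succ_self k)
  have hgap : min c t - π.t k < δ := by
    rcases hkn.lt_or_eq with hlt | rfl
    · have hc_lt : c < π.t (k + 1) := not_le.mp fun h => (lt_irrefl k) ((hk k hlt).mpr h)
      linarith [min_le_left c t, π.sub_le_mesh hlt]
    · linarith [min_le_right c t, π.last, π.mesh_pos]
  have hk_mem := π.mem_Icc hkn
  rw [hsum, sub_sub_sub_cancel_right]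
  refine hmod _ hk_mem _ ⟨le_min hc (hk_mem.1.trans hk_mem.2), min_le_right c t⟩ ?_
  rw [abs_sub_comm, abs_of_nonneg (sub_nonneg.mpr (le_min hk_le_c hk_mem.2))]
  exact hgap

theorem abs_riemannSumRight_stepFun_sub_le {Ω : Type*} {τ : ℕ → ℝ} {m : ℕ} {t δ M : ℝ}
    (ζ : ℕ → Ω → ℝ) (X : ℝ → Ω → ℝ) (ω : Ω) (hτ₀ : ∀ i ≤ m, 0 ≤ τ i)
    (hτ : ∀ i < m, τ i ≤ τ (i + 1)) (π : IntervalPartition 0 t) (hmesh : π.mesh < δ)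
    (hmod : ∀ u ∈ Icc 0 t, ∀ v ∈ Icc 0 t, |u - v| < δ → |X u ω - X v ω| ≤ M) :
    |riemannSumRight 0 t (fun s ω => stepFun τ m (ζ · ω) s) X π ω
        - stepIntegral τ m (ζ · ω) (X · ω) t|
      ≤ (2 * ∑ i ∈ Finset.range m, |ζ i ω|) * M := by
  let R : ℝ → ℝ := fun c => ∑ j ∈ Finset.range π.n,
    if π.t (j + 1) ≤ c then X (π.t (j + 1)) ω - X (π.t j) ω else 0
  have hsplit : riemannSumRight 0 t (fun s ω => stepFun τ m (ζ · ω) s) X π ω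
      = ∑ i ∈ Finset.range m, ζ i ω * (R (τ (i + 1)) - R (τ i)) := by
    simp only [riemannSumRight, stepFun_mul_eq_sum hτ, R]
    rw [Finset.sum_comm]
    simp only [← Finset.mul_sum, ← Finset.sum_sub_distrib]
  rw [hsplit]
  exact abs_sum_sub_stepIntegral_le fun i hi => π.abs_sum_ite_sub_le (hτ₀ i hi) hmesh hmod

theorem step_process_backward_integral_eq_hk_limit_general
    {Ω : Type*} [MeasureSpace Ω] (W : ℝ → Ω → ℝ) (hW : IsBrownianMotion W)
    (T : ℝ) (μ : ℕ) (τ : ℕ → ℝ)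
    (hτ0 : τ 0 = 0) (hτmono : ∀ i < μ, τ i < τ (i + 1))
    (ζ : ℕ → Ω → ℝ) (hζ : ∀ i, Measurable (ζ i)) :
    ∃ I : ℝ → Ω → ℝ,
      IsBackwardIntegral T
        (fun s ω => ∑ i ∈ Finset.range μ, if s ∈ Ioc (τ i) (τ (i + 1)) then ζ i ω else 0)
        W I ∧
      ∀ t : ℝ, 0 < t → t ≤ T →
        TendstoInProbMesh 0 t
          (riemannSumRight 0 t
            (fun s ω => ∑ i ∈ Finset.range μ, if s ∈ Ioc (τ i) (τ (i + 1)) then ζ i ω else 0)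
            W)
          (I t) := by
  have := hW.isProb
  have hτ : ∀ i < μ, τ i ≤ τ (i + 1) := fun i hi => (hτmono i hi).le
  have hτ₀ : ∀ i ≤ μ, 0 ≤ τ i := by
    intro i hi
    induction i with
    | zero => exact hτ0.ge
    | succ i ih => exact (ih (by omega)).trans (hτ i (by omega))
  have hZ : Measurable fun ω => 2 * ∑ i ∈ Finset.range μ, |ζ i ω| :=
    measurable_const.mul (Finset.measurable_sum _ fun i _ => (hζ i).abs)
  have hmod := fun ω (hω : Continuous fun s => W s ω) (n : ℕ) u v (hu : u ∈ Ioo (-1) (T + 1))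
      (hv : v ∈ Ioo (-1) (T + 1)) (huv : |u - v| < 1 / (n + 1)) =>
    abs_sub_le_toReal_ratModulus hω isOpen_Ioo (Metric.isBounded_Ioo _ _) hu hv huv
  refine ⟨fun t ω => stepIntegral τ μ (ζ · ω) (W · ω) t, fun δ hδ ρ hρ => ?_,
    fun t _ htT δ hδ ρ hρ => ?_⟩ <;>
  obtain ⟨n, hn⟩ := exists_measure_le_mul_ratModulus_lt ℙ hW.measurable hW.contPaths
    (Metric.isBounded_Ioo (-1) (T + 1)) hZ hδ hρ
  · refine ⟨1 / (n + 1), by positivity, fun ε hε hεn => (measure_mono_ae ?_).trans_lt hn⟩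
    filter_upwards [hW.contPaths] with ω hω hle
    have hε1 : ε < 1 := hεn.trans_le (by rw [div_le_one (by positivity)]; simp)
    refine hle.trans (Real.iSup_le (fun t => ?_) (by positivity))
    exact abs_integral_stepFun_mul_backwardQuotient_sub_le hω hτ₀ hτ t.2.1 hε hεn
      fun u hu v hv => hmod ω hω n u v ⟨by linarith [hu.1], by linarith [hu.2, t.2.2]⟩
        ⟨by linarith [hv.1], by linarith [hv.2, t.2.2]⟩
  · refine ⟨1 / (n + 1), by positivity, fun π hπ => (measure_mono_ae ?_).trans_lt hn⟩
    filter_upwards [hW.contPaths] with ω hω hle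
    refine hle.trans ?_
    exact abs_riemannSumRight_stepFun_sub_le ζ W ω hτ₀ hτ π hπ
      fun u hu v hv => hmod ω hω n u v ⟨by linarith [hu.1], by linarith [hu.2]⟩
        ⟨by linarith [hv.1], by linarith [hv.2]⟩

/-- Let `W` be a standard Brownian motion and let
`Υ_t = Σ_{i=1}^m ζ_{i−1} 1_{(t_{i−1}, t_i]}(t)`, `t ∈ [0,T]`, be a step process. Then `Υ` is
backward integrable with respect to `W` in the sense of Russo–Vallois, and its backward integral
coincides with the Hänggi–Klimontovich limit: for every `t ∈ (0, T]`,
`∫_0^t Υ_s d⁺W_s = lim_{‖Δ_n‖→0} Σ_j Υ_{t_j}(W_{t_j} − W_{t_{j−1}})` in probability. -/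
theorem step_process_backward_integral_eq_hk_limit
    {Ω : Type*} [MeasureSpace Ω] (W : ℝ → Ω → ℝ) (hW : IsBrownianMotion W)
    (T : ℝ) (hT : 0 < T) (μ : ℕ) (hμ : 0 < μ) (τ : ℕ → ℝ)
    (hτ0 : τ 0 = 0) (hτT : τ μ = T) (hτmono : ∀ i < μ, τ i < τ (i + 1))
    (ζ : ℕ → Ω → ℝ) (hζ : ∀ i, Measurable (ζ i)) :
    ∃ I : ℝ → Ω → ℝ,
      IsBackwardIntegral T
        (fun s ω => ∑ i ∈ Finset.range μ, if s ∈ Ioc (τ i) (τ (i + 1)) then ζ i ω else 0)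
        W I ∧
      ∀ t : ℝ, 0 < t → t ≤ T →
        TendstoInProbMesh 0 t
          (riemannSumRight 0 t
            (fun s ω => ∑ i ∈ Finset.range μ, if s ∈ Ioc (τ i) (τ (i + 1)) then ζ i ω else 0)
            W)
          (I t) :=
  step_process_backward_integral_eq_hk_limit_general W hW T μ τ hτ0 hτmono ζ hζ
end
end
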